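/- Let n = ∑_{i=1}^{r} s_{n_i} M_{n_i}, where n_1 > n_2 > … > n_r ≥ 0 are the positions of the nonzero digits of n and 1 ≤ s_{n_i} ≤ m_{n_i} − 1 for 1 ≤ i ≤ r, and set n^{(k)} = n − ∑_{i=1}^{k} s_{n_i} M_{n_i} for 0 < k ≤ r. Then n·K_n = ∑_{k=1}^{r} ( ∏_{j=1}^{k−1} r_{n_j}^{s_{n_j}} ) · s_{n_k} M_{n_k} K_{s_{n_k} M_{n_k}} + ∑_{k=1}^{r−1} ( ∏_{j=1}^{k−1} r_{n_j}^{s_{n_j}} ) · n^{(k)} · D_{s_{n_k} M_{n_k}} (as functions on G_m, with the empty product equal to 1). -/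

import Mathlib

/-! Write `n = s M_N + t` with `N` the top digit position, so that `t < M_N`. The digits of
`s M_N + t'` for `t' ≤ t` are those of `t'` together with `s` at position `N`, hence
`ψ_{s M_N + t'} = r_N^s ψ_{t'}` and `D_{s M_N + t} = D_{s M_N} + r_N^s D_t`. Summing over `t' < t`,
`n K_n = s M_N K_{s M_N} + t D_{s M_N} + r_N^s t K_t`, and the formula follows by induction on the
number of nonzero digits. -/

open Finset
open scoped ENNReal NNReal

noncomputable section

namespace Vilenkin

/-- The generalized powers `M_0 = 1`, `M_{k+1} = m_k M_k`. -/
def M (m : ℕ → ℕ) : ℕ → ℕ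
  | 0 => 1
  | k + 1 => m k * M m k

/-- The `j`-th digit of `n` in the mixed-radix system determined by `m`. -/
def digit (m : ℕ → ℕ) (n j : ℕ) : ℕ := (n / M m j) % m j

/-- The Vilenkin group `G_m`, the complete direct product of the cyclic groups `Z_{m_k}`. -/
abbrev G (m : ℕ → ℕ) : Type := ∀ k : ℕ, ZMod (m k)

instance (n : ℕ) : MeasurableSpace (ZMod n) := ⊤

/-- The generalized Rademacher functions `r_k(x) = exp(2 π i x_k / m_k)`. -/
def rad (m : ℕ → ℕ) (k : ℕ) (x : G m) : ℂ :=
  Complex.exp (2 * Real.pi * Complex.I * ((x k).val : ℂ) / (m k : ℂ))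

/-- The Vilenkin system `ψ_n = ∏_k r_k^{n_k}` (the product is finite). -/
def psi (m : ℕ → ℕ) (n : ℕ) (x : G m) : ℂ :=
  ∏ j ∈ Finset.range (n + 1), rad m j x ^ digit m n j

/-- The Dirichlet kernels `D_n = ∑_{k=0}^{n-1} ψ_k`. -/
def D (m : ℕ → ℕ) (n : ℕ) (x : G m) : ℂ :=
  ∑ k ∈ Finset.range n, psi m k x

/-- The Fejér kernels `K_n = (1/n) ∑_{k=0}^{n-1} D_k`. -/
def K (m : ℕ → ℕ) (n : ℕ) (x : G m) : ℂ :=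
  (n : ℂ)⁻¹ * ∑ k ∈ Finset.range n, D m k x

/-- The cylinder `I_n(x) = {y : y_j = x_j for j < n}`. -/
def cyl (m : ℕ → ℕ) (n : ℕ) (x : G m) : Set (G m) := {y | ∀ j < n, y j = x j}

/-- The element `e_n` with `n`-th coordinate `1` and all other coordinates `0`. -/
def e (m : ℕ → ℕ) (n : ℕ) : G m := fun k => if k = n then 1 else 0

variable {m : ℕ → ℕ}

theorem M_succ (k : ℕ) : M m (k + 1) = m k * M m k := rfl

theorem M_pos (hm : ∀ k, 0 < m k) (k : ℕ) : 0 < M m k := by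
  induction k with
  | zero => exact Nat.one_pos
  | succ k ih => exact Nat.mul_pos (hm k) ih

theorem M_dvd_M {i j : ℕ} (h : i ≤ j) : M m i ∣ M m j := by
  induction j, h using Nat.le_induction with
  | base => exact dvd_rfl
  | succ j _ ih => exact ih.trans (Dvd.intro_left _ (M_succ j).symm)

theorem M_mono (hm : ∀ k, 0 < m k) : Monotone (M m) :=
  fun _ _ h => Nat.le_of_dvd (M_pos hm _) (M_dvd_M h)

theorem self_lt_M (hm : ∀ k, 2 ≤ m k) (k : ℕ) : k < M m k := by
  induction k with
  | zero => exact Nat.one_pos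
  | succ k ih => rw [M_succ]; nlinarith [hm k]

theorem mul_M_add_lt_M_succ {N q t : ℕ} (hq : q < m N) (ht : t < M m N) :
    q * M m N + t < M m (N + 1) := by
  rw [M_succ]
  nlinarith [Nat.mul_le_mul_right (M m N) hq]

theorem digit_eq_zero_of_lt {n j : ℕ} (h : n < M m j) : digit m n j = 0 := by
  rw [digit, Nat.div_eq_of_lt h, Nat.zero_mod]

theorem digit_mul_M_add_of_lt (hm : ∀ k, 0 < m k) {N j : ℕ} (hj : j < N) (c t : ℕ) :
    digit m (c * M m N + t) j = digit m t j := by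
  obtain ⟨d, hd⟩ := M_dvd_M (m := m) (Nat.succ_le_of_lt hj)
  rw [digit, digit, hd, M_succ, show c * (m j * M m j * d) + t = t + c * d * m j * M m j by ring,
    Nat.add_mul_div_right _ _ (M_pos hm j), Nat.add_mul_mod_self_right]

theorem digit_mul_M_add_self {N q t : ℕ} (hq : q < m N) (ht : t < M m N) :
    digit m (q * M m N + t) N = q := by
  rw [digit, add_comm, Nat.add_mul_div_right _ _ (Nat.zero_lt_of_lt ht), Nat.div_eq_of_lt ht,
    zero_add, Nat.mod_eq_of_lt hq]

theorem digit_mul_M_add (hm : ∀ k, 0 < m k) {N q t : ℕ} (hq : q < m N) (ht : t < M m N)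
    (j : ℕ) : digit m (q * M m N + t) j = digit m t j + if j = N then q else 0 := by
  rcases lt_trichotomy j N with hj | rfl | hj
  · rw [if_neg hj.ne, digit_mul_M_add_of_lt hm hj, add_zero]
  · rw [if_pos rfl, digit_mul_M_add_self hq ht, digit_eq_zero_of_lt ht, zero_add]
  · have hM : M m (N + 1) ≤ M m j := M_mono hm hj
    rw [if_neg hj.ne', digit_eq_zero_of_lt ((mul_M_add_lt_M_succ hq ht).trans_le hM),
      digit_eq_zero_of_lt (ht.trans_le (M_mono hm hj.le))]

theorem psi_eq_prod_range (hm : ∀ k, 2 ≤ m k) {n L : ℕ} (h : n < L) (x : G m) :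
    psi m n x = ∏ j ∈ range L, rad m j x ^ digit m n j := by
  refine prod_subset (range_subset_range.mpr h) fun j _ hj => ?_
  have hnj : n < j := by simpa [Nat.lt_succ_iff] using hj
  rw [digit_eq_zero_of_lt (hnj.trans (self_lt_M hm j)), pow_zero]

theorem psi_mul_M_add (hm : ∀ k, 2 ≤ m k) {N q t : ℕ} (hq : q < m N) (ht : t < M m N)
    (x : G m) : psi m (q * M m N + t) x = rad m N x ^ q * psi m t x := by
  have hm' : ∀ k, 0 < m k := fun k => zero_lt_two.trans_le (hm k)
  set L := q * M m N + t + N + 1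
  rw [psi_eq_prod_range hm (show q * M m N + t < L by omega),
    psi_eq_prod_range hm (show t < L by omega)]
  simp only [digit_mul_M_add hm' hq ht, pow_add, prod_mul_distrib, pow_ite, pow_zero,
    prod_ite_eq', mem_range, show N < L by omega, if_true, mul_comm]

theorem D_mul_M_add (hm : ∀ k, 2 ≤ m k) {N q t : ℕ} (hq : q < m N) (ht : t ≤ M m N)
    (x : G m) : D m (q * M m N + t) x = D m (q * M m N) x + rad m N x ^ q * D m t x := by
  rw [D, D, D, sum_range_add, mul_sum]
  exact congrArg _ (sum_congr rfl fun i hi =>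
    psi_mul_M_add hm hq ((mem_range.1 hi).trans_le ht) x)

theorem sum_range_D_mul_M_add (hm : ∀ k, 2 ≤ m k) {N q T : ℕ} (hq : q < m N) (hT : T ≤ M m N)
    (x : G m) :
    ∑ l ∈ range (q * M m N + T), D m l x =
      ∑ l ∈ range (q * M m N), D m l x + T * D m (q * M m N) x
        + rad m N x ^ q * ∑ l ∈ range T, D m l x := by
  rw [sum_range_add, add_assoc,
    sum_congr rfl fun t ht => D_mul_M_add hm hq ((mem_range.1 ht).le.trans hT) x,
    sum_add_distrib, sum_const, card_range, nsmul_eq_mul, mul_sum]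

theorem natCast_mul_K (n : ℕ) (x : G m) : (n : ℂ) * K m n x = ∑ l ∈ range n, D m l x := by
  rcases eq_or_ne n 0 with rfl | hn
  · simp [K]
  · rw [K, ← mul_assoc, mul_inv_cancel₀ (Nat.cast_ne_zero.2 hn), one_mul]

section Digits

variable {N s : ℕ → ℕ}

theorem sum_mul_M_lt_M (hm : ∀ k, 0 < m k) {a b L : ℕ}
    (hN : ∀ i, a ≤ i → i + 1 < b → N (i + 1) < N i) (hs : ∀ i ∈ Ico a b, s i < m (N i))
    (hL : a < b → N a < L) : ∑ i ∈ Ico a b, s i * M m (N i) < M m L := by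
  induction hd : b - a generalizing a L with
  | zero => rw [Ico_eq_empty_of_le (by omega), sum_empty]; exact M_pos hm L
  | succ d ih =>
    have hab : a < b := by omega
    have htail : ∑ i ∈ Ico (a + 1) b, s i * M m (N i) < M m (N a) :=
      ih (fun i hi hib => hN i (by omega) hib)
        (fun i hi => hs i (Ico_subset_Ico_left (Nat.le_succ a) hi)) (hN a le_rfl) (by omega)
    rw [sum_eq_sum_Ico_succ_bot hab]
    exact (mul_M_add_lt_M_succ (hs a (left_mem_Ico.2 hab)) htail).trans_le (M_mono hm (hL hab))

theorem sum_range_D_sum_mul_M (hm : ∀ k, 2 ≤ m k) {a b : ℕ}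
    (hN : ∀ i, a ≤ i → i + 1 < b → N (i + 1) < N i) (hs : ∀ i ∈ Ico a b, s i < m (N i))
    (x : G m) :
    ∑ l ∈ range (∑ i ∈ Ico a b, s i * M m (N i)), D m l x =
      ∑ k ∈ Ico a b, (∏ j ∈ Ico a k, rad m (N j) x ^ s j) *
        (((s k * M m (N k) : ℕ) : ℂ) * K m (s k * M m (N k)) x +
          ((∑ i ∈ Ico (k + 1) b, s i * M m (N i) : ℕ) : ℂ) * D m (s k * M m (N k)) x) := by
  induction hd : b - a generalizing a with
  | zero => simp [Ico_eq_empty_of_le (show b ≤ a by omega)]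
  | succ d ih =>
    have hab : a < b := by omega
    have hm' : ∀ k, 0 < m k := fun k => zero_lt_two.trans_le (hm k)
    have hN' : ∀ i, a + 1 ≤ i → i + 1 < b → N (i + 1) < N i := fun i hi => hN i (by omega)
    have hs' : ∀ i ∈ Ico (a + 1) b, s i < m (N i) :=
      fun i hi => hs i (Ico_subset_Ico_left (Nat.le_succ a) hi)
    have htail : ∑ i ∈ Ico (a + 1) b, s i * M m (N i) ≤ M m (N a) :=
      (sum_mul_M_lt_M hm' hN' hs' (hN a le_rfl)).le
    have hprod : ∀ k ∈ Ico (a + 1) b, ∏ j ∈ Ico a k, rad m (N j) x ^ s j =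
        rad m (N a) x ^ s a * ∏ j ∈ Ico (a + 1) k, rad m (N j) x ^ s j :=
      fun k hk => prod_eq_prod_Ico_succ_bot (mem_Ico.1 hk).1 _
    rw [sum_eq_sum_Ico_succ_bot hab,
      sum_range_D_mul_M_add hm (hs a (left_mem_Ico.2 hab)) htail, ih hN' hs' (by omega),
      ← natCast_mul_K, sum_eq_sum_Ico_succ_bot hab, Ico_self, prod_empty, one_mul, mul_sum]
    congr 1
    exact sum_congr rfl fun k hk => by rw [hprod k hk, mul_assoc]

end Digits

theorem statement7_general (m : ℕ → ℕ) (hm : ∀ k, 2 ≤ m k) (r : ℕ)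
    (nk : ℕ → ℕ) (hdec : ∀ i : ℕ, 1 ≤ i → i < r → nk (i + 1) < nk i)
    (s : ℕ → ℕ) (hs : ∀ i ∈ Finset.Icc 1 r, 1 ≤ s i ∧ s i ≤ m (nk i) - 1)
    (n : ℕ) (hn : n = ∑ i ∈ Finset.Icc 1 r, s i * M m (nk i)) (x : G m) :
    (n : ℂ) * K m n x =
      (∑ k ∈ Finset.Icc 1 r,
        (∏ j ∈ Finset.Icc 1 (k - 1), rad m (nk j) x ^ s j) *
          ((s k * M m (nk k) : ℕ) : ℂ) * K m (s k * M m (nk k)) x)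
      + ∑ k ∈ Finset.Icc 1 (r - 1),
          (∏ j ∈ Finset.Icc 1 (k - 1), rad m (nk j) x ^ s j) *
            ((n - ∑ i ∈ Finset.Icc 1 k, s i * M m (nk i) : ℕ) : ℂ) *
            D m (s k * M m (nk k)) x := by
  have hs' : ∀ i ∈ Ico 1 (r + 1), s i < m (nk i) := fun i hi => by
    have := (hs i (by rwa [← Ico_add_one_right_eq_Icc])).2
    have := hm (nk i)
    omega
  have hIcc_pred : ∀ k, Icc 1 (k - 1) = Ico 1 k := fun k => by
    ext; simp only [mem_Icc, mem_Ico]; omega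
  have htail : ∀ k ≤ r, n - ∑ i ∈ Icc 1 k, s i * M m (nk i) =
      ∑ i ∈ Ico (k + 1) (r + 1), s i * M m (nk i) := fun k hk => by
    rw [hn, ← Ico_add_one_right_eq_Icc, ← Ico_add_one_right_eq_Icc,
      ← sum_Ico_consecutive _ (by omega : 1 ≤ k + 1) (by omega : k + 1 ≤ r + 1),
      Nat.add_sub_cancel_left]
  calc (n : ℂ) * K m n x
      = ∑ k ∈ Ico 1 (r + 1), (∏ j ∈ Ico 1 k, rad m (nk j) x ^ s j) *
          (((s k * M m (nk k) : ℕ) : ℂ) * K m (s k * M m (nk k)) x +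
            ((∑ i ∈ Ico (k + 1) (r + 1), s i * M m (nk i) : ℕ) : ℂ) *
              D m (s k * M m (nk k)) x) := by
        rw [natCast_mul_K, hn, ← Ico_add_one_right_eq_Icc]
        exact sum_range_D_sum_mul_M hm (fun i hi hir => hdec i hi (by omega)) hs' x
    _ = _ := by
        rw [← Ico_add_one_right_eq_Icc 1 r]
        simp only [mul_add, sum_add_distrib, hIcc_pred, mul_assoc]
        congr 1
        -- the term `k = r` carries the factor `n^{(r)} = 0`
        refine (sum_subset (Ico_subset_Ico_right r.le_succ) fun k hk hk' => ?_).symm.trans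
          (sum_congr rfl fun k hk => by rw [htail k (mem_Ico.1 hk).2.le])
        obtain rfl : k = r := by simp only [mem_Ico] at hk hk'; omega
        simp

/-- decomposition of `n K_n` along the nonzero digits of `n`. -/
theorem statement7 (m : ℕ → ℕ) (hm : ∀ k, 2 ≤ m k) (r : ℕ) (hr : 1 ≤ r)
    (nk : ℕ → ℕ) (hdec : ∀ i : ℕ, 1 ≤ i → i < r → nk (i + 1) < nk i)
    (s : ℕ → ℕ) (hs : ∀ i ∈ Finset.Icc 1 r, 1 ≤ s i ∧ s i ≤ m (nk i) - 1)
    (n : ℕ) (hn : n = ∑ i ∈ Finset.Icc 1 r, s i * M m (nk i)) (x : G m) :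
    (n : ℂ) * K m n x =
      (∑ k ∈ Finset.Icc 1 r,
        (∏ j ∈ Finset.Icc 1 (k - 1), rad m (nk j) x ^ s j) *
          ((s k * M m (nk k) : ℕ) : ℂ) * K m (s k * M m (nk k)) x)
      + ∑ k ∈ Finset.Icc 1 (r - 1),
          (∏ j ∈ Finset.Icc 1 (k - 1), rad m (nk j) x ^ s j) *
            ((n - ∑ i ∈ Finset.Icc 1 k, s i * M m (nk i) : ℕ) : ℂ) *
            D m (s k * M m (nk k)) x :=
  statement7_general m hm r nk hdec s hs n hn x

end Vilenkin

end
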